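/- Let Γ be a discrete cocompact subgroup of isometries of ℝⁿ such that ℰ is nonempty. Then for every X ∈ ℰ the Voronoi cell V_X is the intersection of the half-spaces determined by its (n−1)-dimensional faces: V_X = ⋂_{Y ∈ 𝔖(X)} H(X,Y), where H(X,Y) = { z ∈ ℝⁿ : ⟪z − (X+Y)/2, Y − X⟫ ≤ 0 }. -/

import Mathlib

open Metric

noncomputable section

/-- The rotational (linear) part of an isometry of Euclidean space,
evaluated at a vector `v`. -/
def rotPart {n : ℕ} (γ : EuclideanSpace ℝ (Fin n) ≃ᵢ EuclideanSpace ℝ (Fin n))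
    (v : EuclideanSpace ℝ (Fin n)) : EuclideanSpace ℝ (Fin n) :=
  γ v - γ 0

/-- A subgroup of isometries acts properly discontinuously. -/
def ProperlyDisc {n : ℕ}
    (Γ : Subgroup (EuclideanSpace ℝ (Fin n) ≃ᵢ EuclideanSpace ℝ (Fin n))) : Prop :=
  ∀ K : Set (EuclideanSpace ℝ (Fin n)), IsCompact K →
    {γ : EuclideanSpace ℝ (Fin n) ≃ᵢ EuclideanSpace ℝ (Fin n) |
      γ ∈ Γ ∧ ((γ '' K) ∩ K).Nonempty}.Finite

/-- A subgroup of isometries acts cocompactly. -/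
def CocompactAct {n : ℕ}
    (Γ : Subgroup (EuclideanSpace ℝ (Fin n) ≃ᵢ EuclideanSpace ℝ (Fin n))) : Prop :=
  ∃ K : Set (EuclideanSpace ℝ (Fin n)), IsCompact K ∧ ⋃ γ ∈ Γ, γ '' K = Set.univ

/-- The fixed-point set of a subgroup of isometries. -/
def FixSet {n : ℕ}
    (H : Subgroup (EuclideanSpace ℝ (Fin n) ≃ᵢ EuclideanSpace ℝ (Fin n))) :
    Set (EuclideanSpace ℝ (Fin n)) :=
  {y | ∀ h ∈ H, h y = y}

/-- `ℰ`: the set of points which are isolated points of the fixed-point set of some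
subgroup of `Γ`. -/
def SingSet {n : ℕ}
    (Γ : Subgroup (EuclideanSpace ℝ (Fin n) ≃ᵢ EuclideanSpace ℝ (Fin n))) :
    Set (EuclideanSpace ℝ (Fin n)) :=
  {x | ∃ H, H ≤ Γ ∧ x ∈ FixSet H ∧ ∃ ε > 0, FixSet H ∩ ball x ε = {x}}

/-- The Voronoi cell of `x` with respect to a set `E`. -/
def Vor {n : ℕ} (E : Set (EuclideanSpace ℝ (Fin n))) (x : EuclideanSpace ℝ (Fin n)) :
    Set (EuclideanSpace ℝ (Fin n)) :=
  {z | ∀ y ∈ E, dist z x ≤ dist z y}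

/-- `𝔖(x)`: the set of points `y ∈ ℰ`, `y ≠ x`, whose Voronoi cell meets that of `x`
in a face of dimension `n - 1`. -/
def SS {n : ℕ}
    (Γ : Subgroup (EuclideanSpace ℝ (Fin n) ≃ᵢ EuclideanSpace ℝ (Fin n)))
    (x : EuclideanSpace ℝ (Fin n)) : Set (EuclideanSpace ℝ (Fin n)) :=
  {y | y ∈ SingSet Γ ∧ y ≠ x ∧
    Module.finrank ℝ
      (affineSpan ℝ (Vor (SingSet Γ) x ∩ Vor (SingSet Γ) y)).direction = n - 1}

/-- `Γ_x^#(v)`: the orbit of the vector `v` under the rotational parts of the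
stabilizer of `x` in `Γ`. -/
def rotSet {n : ℕ}
    (Γ : Subgroup (EuclideanSpace ℝ (Fin n) ≃ᵢ EuclideanSpace ℝ (Fin n)))
    (x v : EuclideanSpace ℝ (Fin n)) : Set (EuclideanSpace ℝ (Fin n)) :=
  {w | ∃ γ ∈ Γ, γ x = x ∧ rotPart γ v = w}

/-- The reflection property. -/
def ReflProp {n : ℕ}
    (Γ : Subgroup (EuclideanSpace ℝ (Fin n) ≃ᵢ EuclideanSpace ℝ (Fin n))) : Prop :=
  ∀ x ∈ SingSet Γ, ∀ y ∈ SS Γ x, rotSet Γ x (x - y) = {x - y, y - x}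

/-- The midpoint property. -/
def MidProp {n : ℕ}
    (Γ : Subgroup (EuclideanSpace ℝ (Fin n) ≃ᵢ EuclideanSpace ℝ (Fin n))) : Prop :=
  ∀ x ∈ SingSet Γ, ∀ y ∈ SS Γ x,
    midpoint ℝ x y ∈ Vor (SingSet Γ) x ∩ Vor (SingSet Γ) y ∧
    ∀ z ∈ SingSet Γ, z ≠ x → z ≠ y → midpoint ℝ x y ∉ Vor (SingSet Γ) z

/-!
The set `ℰ` is invariant under `Γ`, so translating a compact set whose `Γ`-translates cover `ℝⁿ`
shows that it is relatively dense. It is also locally finite: `Fix(H)` is convex, so an isolated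
point of it is all of it, and such a point of a compact `K` is determined by the finitely many
`γ ∈ Γ` with `γ K ∩ K ≠ ∅` that fix it. Consequently the bisector half-spaces of the finitely many
`Y ∈ ℰ` near `X` already cut out `V_X`. Take a minimal such family. Each of its half-spaces is
violated by some point `z` satisfying all others; the segment from `X` to `z` crosses the bisector
of `X` and `Y` at a point strictly inside all other half-spaces, and a small disc of the bisector
around it lies in `V_X ∩ V_Y`, which therefore spans a hyperplane.
-/

open AffineMap AffineSubspace
open scoped InnerProductSpace

section InnerProductSpace

variable {V : Type*} [NormedAddCommGroup V] [InnerProductSpace ℝ V]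

theorem two_mul_inner_sub_midpoint (z x y : V) :
    2 * ⟪z - midpoint ℝ x y, y - x⟫_ℝ = ‖z - x‖ ^ 2 - ‖z - y‖ ^ 2 := by
  have hm : z - midpoint ℝ x y = (2 : ℝ)⁻¹ • ((z - x) + (z - y)) := by
    rw [midpoint_eq_smul_add, invOf_eq_inv]; module
  have hd : y - x = (z - x) - (z - y) := by abel
  rw [hm, hd]
  generalize z - x = a, z - y = b
  rw [real_inner_smul_left, inner_add_left, inner_sub_right, inner_sub_right,
    real_inner_self_eq_norm_sq, real_inner_self_eq_norm_sq, real_inner_comm a b]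
  ring

theorem inner_sub_midpoint_nonpos_iff {z x y : V} :
    ⟪z - midpoint ℝ x y, y - x⟫_ℝ ≤ 0 ↔ dist z x ≤ dist z y := by
  rw [dist_eq_norm, dist_eq_norm, ← sq_le_sq₀ (norm_nonneg _) (norm_nonneg _)]
  have := two_mul_inner_sub_midpoint z x y
  constructor <;> intro h <;> linarith

theorem inner_sub_midpoint_neg_iff {z x y : V} :
    ⟪z - midpoint ℝ x y, y - x⟫_ℝ < 0 ↔ dist z x < dist z y := by
  rw [dist_eq_norm, dist_eq_norm, ← sq_lt_sq₀ (norm_nonneg _) (norm_nonneg _)]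
  have := two_mul_inner_sub_midpoint z x y
  constructor <;> intro h <;> linarith

theorem inner_lineMap_sub (x z m d : V) (t : ℝ) :
    ⟪lineMap x z t - m, d⟫_ℝ = (1 - t) * ⟪x - m, d⟫_ℝ + t * ⟪z - m, d⟫_ℝ := by
  rw [lineMap_apply_module,
    show (1 - t) • x + t • z - m = (1 - t) • (x - m) + t • (z - m) by module,
    inner_add_left, real_inner_smul_left, real_inner_smul_left]

theorem exists_mem_perpBisector_forall_dist_lt {x y z : V} {T : Set V} (hxT : x ∉ T)
    (hzT : ∀ y' ∈ T, dist z x ≤ dist z y') (hzy : dist z y < dist z x) :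
    ∃ w ∈ perpBisector x y, ∀ y' ∈ T, dist w x < dist w y' := by
  have hx_neg : ∀ y', y' ≠ x → ⟪x - midpoint ℝ x y', y' - x⟫_ℝ < 0 := fun y' hy' =>
    inner_sub_midpoint_neg_iff.2 (by simpa using hy'.symm)
  have ha := hx_neg y (by rintro rfl; exact lt_irrefl _ hzy)
  have hb : 0 < ⟪z - midpoint ℝ x y, y - x⟫_ℝ := by
    by_contra! h
    exact (inner_sub_midpoint_nonpos_iff.1 h).not_gt hzy
  set a := ⟪x - midpoint ℝ x y, y - x⟫_ℝ
  set b := ⟪z - midpoint ℝ x y, y - x⟫_ℝ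
  have hline : ∀ t, ⟪lineMap x z t - midpoint ℝ x y, y - x⟫_ℝ = (1 - t) * a + t * b :=
    fun t => inner_lineMap_sub x z _ _ t
  have ht0 : 0 < a / (a - b) := div_pos_of_neg_of_neg ha (by linarith)
  have ht1 : a / (a - b) < 1 := (div_lt_one_of_neg (by linarith)).2 (by linarith)
  refine ⟨lineMap x z (a / (a - b)), ?_, fun y' hy' => ?_⟩
  · rw [mem_perpBisector_iff_inner_eq_zero, vsub_eq_sub, vsub_eq_sub, hline]
    field_simp [(by linarith : a - b < 0).ne]
    ring
  · apply inner_sub_midpoint_neg_iff.1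
    rw [inner_lineMap_sub]
    nlinarith [hx_neg y' (ne_of_mem_of_not_mem hy' hxT),
      inner_sub_midpoint_nonpos_iff.2 (hzT y' hy')]

end InnerProductSpace

section NormedSpace

variable {V : Type*} [NormedAddCommGroup V] [NormedSpace ℝ V]

theorem Convex.eq_singleton_of_inter_ball_eq {C : Set V} (hC : Convex ℝ C) {x : V}
    (hx : x ∈ C) {ε : ℝ} (hiso : C ∩ ball x ε = {x}) : C = {x} := by
  refine Set.eq_singleton_iff_unique_mem.2 ⟨hx, fun y hy => ?_⟩
  have hε : 0 < ε := pos_of_mem_ball (hiso.symm ▸ rfl : x ∈ C ∩ ball x ε).2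
  obtain ⟨t, ht0, ht⟩ := exists_pos_mul_lt hε (dist x y)
  have hmem : lineMap x y (min t 1) ∈ C ∩ ball x ε := by
    refine ⟨hC.lineMap_mem hx hy ⟨by positivity, min_le_right _ _⟩, ?_⟩
    rw [mem_ball, dist_lineMap_left, Real.norm_of_nonneg (by positivity)]
    nlinarith [min_le_left t 1, dist_nonneg (x := x) (y := y)]
  rw [hiso, Set.mem_singleton_iff, lineMap_eq_left_iff] at hmem
  exact (hmem.resolve_right (by positivity)).symm

theorem direction_affineSpan_eq_of_ball_subset {P : AffineSubspace ℝ V} {T : Set V}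
    (hTP : T ⊆ P) {w : V} {ε : ℝ} (hε : 0 < ε)
    (hball : ∀ v ∈ P.direction, ‖v‖ < ε → w + v ∈ T) :
    (affineSpan ℝ T).direction = P.direction := by
  refine le_antisymm (direction_le (affineSpan_le.2 hTP)) fun v hv => ?_
  obtain ⟨c, hc0, hc⟩ := exists_pos_mul_lt hε ‖v‖
  have hw : w ∈ T := by simpa using hball 0 P.direction.zero_mem (by simpa)
  have hwv : w + c • v ∈ T :=
    hball _ (P.direction.smul_mem c hv) (by rwa [norm_smul, Real.norm_of_nonneg hc0.le, mul_comm])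
  have hcv := vsub_mem_direction (subset_affineSpan ℝ T hwv) (subset_affineSpan ℝ T hw)
  rw [vsub_eq_sub, add_sub_cancel_left] at hcv
  exact (Submodule.smul_mem_iff _ hc0.ne').1 hcv

theorem forall_dist_le_of_forall_near {S : Set V} {R : ℝ} (hR : 0 < R)
    (hdense : ∀ z, ∃ y ∈ S, dist z y ≤ R) {x z : V}
    (hnear : ∀ y ∈ S, y ≠ x → dist x y ≤ 4 * R → dist z x ≤ dist z y) :
    ∀ y ∈ S, dist z x ≤ dist z y := by
  have hzx : dist z x ≤ 2 * R := by
    -- otherwise a point of `S` near the point `p ∈ [x, z]` with `dist p x = 2 * R` is closer to `z`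
    by_contra! hfar
    have hd : 0 < dist z x := by linarith
    set p := lineMap x z (2 * R / dist z x)
    have hpx : dist p x = 2 * R := by
      rw [dist_lineMap_left, Real.norm_of_nonneg (by positivity), dist_comm x z,
        div_mul_cancel₀ _ hd.ne']
    have hpz : dist p z = dist z x - 2 * R := by
      rw [dist_lineMap_right, Real.norm_of_nonneg (sub_nonneg.2 ((div_le_one hd).2 hfar.le)),
        dist_comm x z, sub_mul, div_mul_cancel₀ _ hd.ne', one_mul]
    obtain ⟨y, hyS, hpy⟩ := hdense p
    have hxy_le : dist x y ≤ 3 * R := by linarith [dist_triangle x p y, dist_comm x p]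
    have hxy_ge : R ≤ dist x y := by
      linarith [dist_triangle x y p, dist_comm x p, dist_comm y p]
    have hyx : y ≠ x := by rintro rfl; rw [dist_self] at hxy_ge; linarith
    linarith [hnear y hyS hyx (by linarith), dist_triangle z p y, dist_comm z p]
  intro y hy
  rcases eq_or_ne y x with rfl | hyx
  · exact le_rfl
  by_cases hxy : dist x y ≤ 4 * R
  · exact hnear y hy hyx hxy
  · linarith [dist_triangle x z y, dist_comm x z]

end NormedSpace

theorem finrank_orthogonal_span_singleton_eq_sub_one {E : Type*} [NormedAddCommGroup E]
    [InnerProductSpace ℝ E] [FiniteDimensional ℝ E] {v : E} (hv : v ≠ 0) :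
    Module.finrank ℝ (ℝ ∙ v)ᗮ = Module.finrank ℝ E - 1 := by
  have := Submodule.finrank_add_finrank_orthogonal (ℝ ∙ v)
  rw [finrank_span_singleton hv] at this
  omega

section Voronoi

variable {n : ℕ}

local notation "ℝⁿ" => EuclideanSpace ℝ (Fin n)

def facetNeighbors (S : Set ℝⁿ) (x : ℝⁿ) : Set ℝⁿ :=
  {y | y ∈ S ∧ y ≠ x ∧
    Module.finrank ℝ (affineSpan ℝ (Vor S x ∩ Vor S y)).direction = n - 1}

theorem vor_inter_vor_subset_perpBisector {S : Set ℝⁿ} {x y : ℝⁿ} (hx : x ∈ S) (hy : y ∈ S) :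
    Vor S x ∩ Vor S y ⊆ perpBisector x y := fun _ hu =>
  mem_perpBisector_iff_dist_eq.2 ((hu.1 y hy).antisymm (hu.2 x hx))

theorem mem_facetNeighbors_of_irredundant {S : Set ℝⁿ} {x y : ℝⁿ} (hx : x ∈ S) (hy : y ∈ S)
    {T : Finset ℝⁿ} (hxT : x ∉ T)
    (hcut : {z | dist z x ≤ dist z y} ∩ ⋂ y' ∈ T, {z | dist z x ≤ dist z y'} ⊆ Vor S x)
    (hirr : ¬ ⋂ y' ∈ T, {z | dist z x ≤ dist z y'} ⊆ Vor S x) :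
    y ∈ facetNeighbors S x := by
  obtain ⟨z, hzT, hzx⟩ := Set.not_subset.1 hirr
  have hzy : dist z y < dist z x := not_le.1 fun h => hzx (hcut ⟨h, hzT⟩)
  simp only [Set.mem_iInter₂, Set.mem_ofPred_eq] at hzT
  obtain ⟨w, hw, hwT⟩ :=
    exists_mem_perpBisector_forall_dist_lt (T := (T : Set ℝⁿ)) hxT hzT hzy
  obtain ⟨ε, hε, hball⟩ := Metric.eventually_nhds_iff_ball.1 <|
    (T.eventually_all).2 fun y' hy' =>
      (isOpen_lt (continuous_id.dist continuous_const)
        (continuous_id.dist continuous_const)).eventually_mem (hwT y' hy')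
  have hface : ∀ v ∈ (perpBisector x y).direction, ‖v‖ < ε → w + v ∈ Vor S x ∩ Vor S y := by
    intro v hv hvε
    have hxy : dist (w + v) x = dist (w + v) y :=
      mem_perpBisector_iff_dist_eq.1 (add_comm v w ▸ vadd_mem_of_mem_direction hv hw)
    have hvx : w + v ∈ Vor S x := hcut ⟨hxy.le, Set.mem_iInter₂.2 fun y' hy' =>
      Set.mem_ofPred.2 (hball (w + v) (by simpa using hvε) y' hy').le⟩
    exact ⟨hvx, fun y' hy' => hxy ▸ hvx y' hy'⟩
  have hyx : y ≠ x := by rintro rfl; exact lt_irrefl _ hzy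
  refine ⟨hy, hyx, ?_⟩
  rw [direction_affineSpan_eq_of_ball_subset (vor_inter_vor_subset_perpBisector hx hy) hε hface,
    direction_perpBisector, finrank_orthogonal_span_singleton_eq_sub_one (vsub_ne_zero.2 hyx),
    finrank_euclideanSpace_fin]

theorem vor_eq_iInter_facetNeighbors {S : Set ℝⁿ} (hS : ∀ K, IsCompact K → (S ∩ K).Finite)
    {R : ℝ} (hR : 0 < R) (hdense : ∀ z, ∃ y ∈ S, dist z y ≤ R) {x : ℝⁿ} (hx : x ∈ S) :
    Vor S x = ⋂ y ∈ facetNeighbors S x, {z | dist z x ≤ dist z y} := by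
  refine subset_antisymm (fun z hz => Set.mem_iInter₂.2 fun y hy => hz y hy.1) ?_
  have hF : ((S ∩ closedBall x (4 * R)) \ {x}).Finite :=
    (hS _ (isCompact_closedBall x _)).sdiff
  have hcutF : ⋂ y ∈ hF.toFinset, {z | dist z x ≤ dist z y} ⊆ Vor S x := fun z hz =>
    forall_dist_le_of_forall_near hR hdense fun y hy hyx hxy => by
      simp only [Set.mem_iInter₂, Set.mem_ofPred_eq] at hz
      exact hz y (hF.mem_toFinset.2 ⟨⟨hy, mem_closedBall_comm.1 hxy⟩, hyx⟩)
  obtain ⟨G, hGF, hGmin⟩ := exists_minimal_le_of_wellFoundedLT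
    (fun G : Finset ℝⁿ => ⋂ y ∈ G, {z | dist z x ≤ dist z y} ⊆ Vor S x) _ hcutF
  have hGfacets : ∀ y ∈ G, y ∈ facetNeighbors S x := by
    intro y hy
    have hyF := hF.mem_toFinset.1 (hGF hy)
    refine mem_facetNeighbors_of_irredundant hx hyF.1.1
      (fun hxG => (hF.mem_toFinset.1 (hGF (Finset.mem_of_mem_erase hxG))).2 rfl) ?_
      (hGmin.not_prop_of_lt (Finset.erase_ssubset hy))
    have hcut := hGmin.prop
    rwa [← Finset.insert_erase hy, Finset.set_biInter_insert] at hcut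
  intro z hz
  simp only [Set.mem_iInter₂, Set.mem_ofPred_eq] at hz
  exact hGmin.prop (Set.mem_iInter₂.2 fun y hy => hz y (hGfacets y hy))

end Voronoi

section Isometries

variable {n : ℕ}

local notation "ℝⁿ" => EuclideanSpace ℝ (Fin n)

theorem convex_fixSet (H : Subgroup (ℝⁿ ≃ᵢ ℝⁿ)) : Convex ℝ (FixSet H) :=
  fun x hx y hy a b _ _ hab h hh => by
    have hcombo := Convex.combo_affine_apply (x := x) (y := y)
      (f := h.toRealAffineIsometryEquiv.toAffineEquiv.toAffineMap) hab
    simp only [AffineEquiv.coe_toAffineMap, AffineIsometryEquiv.coe_toAffineEquiv,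
      IsometryEquiv.coeFn_toRealAffineIsometryEquiv] at hcombo
    rw [hcombo, hx h hh, hy h hh]

theorem fixSet_map_conj (γ : ℝⁿ ≃ᵢ ℝⁿ) (H : Subgroup (ℝⁿ ≃ᵢ ℝⁿ)) :
    FixSet (H.map (MulAut.conj γ).toMonoidHom) = γ '' FixSet H := by
  ext y
  simp only [FixSet, MulEquiv.toMonoidHom_eq_coe, Subgroup.mem_map, MonoidHom.coe_coe,
    MulAut.conj_apply, forall_exists_index, and_imp, forall_apply_eq_imp_iff₂,
    IsometryEquiv.coe_mul, Function.comp_apply, Set.mem_ofPred_eq, Set.mem_image]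
  constructor
  · intro hy
    refine ⟨γ⁻¹ y, fun h hh => γ.injective ?_, IsometryEquiv.apply_inv_self γ y⟩
    rw [hy h hh, IsometryEquiv.apply_inv_self]
  · rintro ⟨x, hx, rfl⟩ h hh
    rw [IsometryEquiv.inv_apply_self, hx h hh]

theorem mem_singSet_iff {Γ : Subgroup (ℝⁿ ≃ᵢ ℝⁿ)} {x : ℝⁿ} :
    x ∈ SingSet Γ ↔ ∃ H ≤ Γ, FixSet H = {x} := by
  constructor
  · rintro ⟨H, hHΓ, hx, ε, -, hiso⟩
    exact ⟨H, hHΓ, (convex_fixSet H).eq_singleton_of_inter_ball_eq hx hiso⟩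
  · rintro ⟨H, hHΓ, hH⟩
    refine ⟨H, hHΓ, hH ▸ rfl, 1, one_pos, ?_⟩
    rw [hH, Set.singleton_inter_of_mem (mem_ball_self one_pos)]

theorem apply_mem_singSet {Γ : Subgroup (ℝⁿ ≃ᵢ ℝⁿ)} {γ : ℝⁿ ≃ᵢ ℝⁿ} (hγ : γ ∈ Γ) {x : ℝⁿ}
    (hx : x ∈ SingSet Γ) : γ x ∈ SingSet Γ := by
  obtain ⟨H, hHΓ, hH⟩ := mem_singSet_iff.1 hx
  refine mem_singSet_iff.2 ⟨H.map (MulAut.conj γ).toMonoidHom, ?_, ?_⟩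
  · rintro _ ⟨h, hh, rfl⟩
    exact Γ.mul_mem (Γ.mul_mem hγ (hHΓ hh)) (Γ.inv_mem hγ)
  · rw [fixSet_map_conj, hH, Set.image_singleton]

theorem singSet_inter_finite {Γ : Subgroup (ℝⁿ ≃ᵢ ℝⁿ)} (hdisc : ProperlyDisc Γ) {K : Set ℝⁿ}
    (hK : IsCompact K) : (SingSet Γ ∩ K).Finite := by
  set D := {γ : ℝⁿ ≃ᵢ ℝⁿ | γ ∈ Γ ∧ ((γ '' K) ∩ K).Nonempty}
  refine Set.Finite.of_finite_image (f := fun x => {γ ∈ D | γ x = x})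
    ((hdisc K hK).finite_subsets.subset ?_) ?_
  · rintro _ ⟨x, -, rfl⟩
    exact Set.sep_subset _ _
  · rintro x ⟨hx, hxK⟩ x' - hxx'
    obtain ⟨H, hHΓ, hH⟩ := mem_singSet_iff.1 hx
    have hx'H : x' ∈ FixSet H := fun h hh => by
      have hhx : h x = x := (hH ▸ rfl : x ∈ FixSet H) h hh
      have hD : h ∈ {γ ∈ D | γ x = x} := ⟨⟨hHΓ hh, x, ⟨x, hxK, hhx⟩, hxK⟩, hhx⟩
      exact ((Set.ext_iff.1 hxx' h).1 hD).2
    rw [hH] at hx'H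
    exact hx'H.symm

theorem exists_dist_le_singSet {Γ : Subgroup (ℝⁿ ≃ᵢ ℝⁿ)} (hcc : CocompactAct Γ)
    (hne : (SingSet Γ).Nonempty) : ∃ R > 0, ∀ z, ∃ y ∈ SingSet Γ, dist z y ≤ R := by
  obtain ⟨K, hK, hcover⟩ := hcc
  obtain ⟨x₀, hx₀⟩ := hne
  have hcov : ∀ z, ∃ γ ∈ Γ, ∃ k ∈ K, γ k = z := fun z => by
    simpa using Set.iUnion₂_eq_univ_iff.1 hcover z
  refine ⟨diam K + 1, by positivity, fun z => ?_⟩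
  obtain ⟨γ, hγ, k, hk, rfl⟩ := hcov z
  obtain ⟨γ₀, hγ₀, k₀, hk₀, rfl⟩ := hcov x₀
  refine ⟨γ k₀, ?_, ?_⟩
  · simpa using apply_mem_singSet (Γ.mul_mem hγ (Γ.inv_mem hγ₀)) hx₀
  · rw [γ.dist_eq]
    linarith [dist_le_diam_of_mem hK.isBounded hk hk₀]

end Isometries

theorem voronoi_cell_eq_inter_halfspaces_general {n : ℕ}
    (Γ : Subgroup (EuclideanSpace ℝ (Fin n) ≃ᵢ EuclideanSpace ℝ (Fin n)))
    (hdisc : ProperlyDisc Γ) (hcc : CocompactAct Γ)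
    (hne : (SingSet Γ).Nonempty)
    (X : EuclideanSpace ℝ (Fin n)) (hX : X ∈ SingSet Γ) :
    Vor (SingSet Γ) X =
      ⋂ Y ∈ SS Γ X,
        {z : EuclideanSpace ℝ (Fin n) |
          inner (𝕜 := ℝ) (z - midpoint ℝ X Y) (Y - X) ≤ 0} := by
  obtain ⟨R, hR, hdense⟩ := exists_dist_le_singSet hcc hne
  simp_rw [inner_sub_midpoint_nonpos_iff]
  exact vor_eq_iInter_facetNeighbors (fun K hK => singSet_inter_finite hdisc hK) hR hdense hX

theorem voronoi_cell_eq_inter_halfspaces {n : ℕ} (hn : 1 ≤ n)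
    (Γ : Subgroup (EuclideanSpace ℝ (Fin n) ≃ᵢ EuclideanSpace ℝ (Fin n)))
    (hdisc : ProperlyDisc Γ) (hcc : CocompactAct Γ)
    (hne : (SingSet Γ).Nonempty)
    (X : EuclideanSpace ℝ (Fin n)) (hX : X ∈ SingSet Γ) :
    Vor (SingSet Γ) X =
      ⋂ Y ∈ SS Γ X,
        {z : EuclideanSpace ℝ (Fin n) |
          inner (𝕜 := ℝ) (z - midpoint ℝ X Y) (Y - X) ≤ 0} :=
  voronoi_cell_eq_inter_halfspaces_general Γ hdisc hcc hne X hX
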